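/- The set Γ̂ of matrices over ZMod 5 of the form !![1, n, 3*n^2+2*n, a; 0, 1, n, b; 0, 0, 1, c; 0, 0, 0, 1] with n, a, b, c ∈ ZMod 5 is a subgroup of GL(4, ZMod 5): it contains the identity matrix, and it is closed under matrix multiplication and under inverses; moreover it contains à and T̃. -/

import Mathlib

open Matrix

/-- The reduction mod 5 of `P⁻¹A⁻¹P`. -/
def Atil : Matrix (Fin 4) (Fin 4) (ZMod 5) :=
  !![1, 1, 0, 0; 0, 1, 1, 4; 0, 0, 1, 4; 0, 0, 0, 1]

/-- The reduction mod 5 of `P⁻¹T⁻¹P`. -/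
def Ttil : Matrix (Fin 4) (Fin 4) (ZMod 5) :=
  !![1, 0, 0, 0; 0, 1, 0, 0; 0, 0, 1, 1; 0, 0, 0, 1]

/-- The set `Γ̂` of matrices over `ZMod 5`. -/
def GammaHat : Set (Matrix (Fin 4) (Fin 4) (ZMod 5)) :=
  {X | ∃ n a b c : ZMod 5,
    X = !![1, n, 3 * n ^ 2 + 2 * n, a; 0, 1, n, b; 0, 0, 1, c; 0, 0, 0, 1]}

/-!
Over any commutative ring `R`, the matrices `!![1, n, q n, a; 0, 1, n, b; 0, 0, 1, c; 0, 0, 0, 1]`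
are closed under products and inverses as soon as `q (n + m) = q n + n * m + q m`, because the
`(1, 3)` entry of a product of two of them is `q n + n * m + q m`. In `ZMod 5` we have `3 = 2⁻¹`,
so `3 * n ^ 2 + 2 * n = n ^ 2 / 2 + 2 * n` satisfies this functional equation.
-/

namespace UnipotentFamily

variable {R : Type*} [CommRing R]

def matrix (q : R → R) (n a b c : R) : Matrix (Fin 4) (Fin 4) R :=
  !![1, n, q n, a; 0, 1, n, b; 0, 0, 1, c; 0, 0, 0, 1]

def carrier (q : R → R) : Set (Matrix (Fin 4) (Fin 4) R) :=
  {X | ∃ n a b c, X = matrix q n a b c}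

variable {q : R → R}

theorem matrix_mul (hq : ∀ n m, q (n + m) = q n + n * m + q m) (n a b c m d e f : R) :
    matrix q n a b c * matrix q m d e f =
      matrix q (n + m) (d + n * e + q n * f + a) (e + n * f + b) (f + c) := by
  ext i j
  fin_cases i <;> fin_cases j <;>
    simp [matrix, Matrix.mul_apply, Fin.sum_univ_four, hq] <;> ring

theorem matrix_zero (hq : ∀ n m, q (n + m) = q n + n * m + q m) : matrix q 0 0 0 0 = 1 := by
  have hq0 : q 0 = 0 := by simpa using hq 0 0
  ext i j
  fin_cases i <;> fin_cases j <;> simp [matrix, hq0]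

theorem one_mem (hq : ∀ n m, q (n + m) = q n + n * m + q m) : 1 ∈ carrier q :=
  ⟨0, 0, 0, 0, (matrix_zero hq).symm⟩

theorem mul_mem (hq : ∀ n m, q (n + m) = q n + n * m + q m) {X Y : Matrix (Fin 4) (Fin 4) R}
    (hX : X ∈ carrier q) (hY : Y ∈ carrier q) : X * Y ∈ carrier q := by
  obtain ⟨n, a, b, c, rfl⟩ := hX
  obtain ⟨m, d, e, f, rfl⟩ := hY
  exact ⟨_, _, _, _, matrix_mul hq n a b c m d e f⟩

theorem exists_inverse_mem (hq : ∀ n m, q (n + m) = q n + n * m + q m)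
    {X : Matrix (Fin 4) (Fin 4) R} (hX : X ∈ carrier q) :
    ∃ Y ∈ carrier q, X * Y = 1 ∧ Y * X = 1 := by
  obtain ⟨n, a, b, c, rfl⟩ := hX
  have hXY : matrix q n a b c * matrix q (-n) (-a + n * b - n ^ 2 * c + q n * c) (-b + n * c) (-c)
      = 1 := by
    rw [matrix_mul hq, ← matrix_zero hq]
    congr 1 <;> ring
  exact ⟨_, ⟨_, _, _, _, rfl⟩, hXY, mul_eq_one_comm.mp hXY⟩

end UnipotentFamily

theorem ZMod.three_mul_sq_add_two_mul_add (n m : ZMod 5) :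
    3 * (n + m) ^ 2 + 2 * (n + m) = (3 * n ^ 2 + 2 * n) + n * m + (3 * m ^ 2 + 2 * m) := by
  have h5 : (5 : ZMod 5) = 0 := rfl
  linear_combination (n * m) * h5

theorem gammaHat_subgroup :
    (1 : Matrix (Fin 4) (Fin 4) (ZMod 5)) ∈ GammaHat ∧
    (∀ X ∈ GammaHat, ∀ Y ∈ GammaHat, X * Y ∈ GammaHat) ∧
    (∀ X ∈ GammaHat, ∃ Y ∈ GammaHat, X * Y = 1 ∧ Y * X = 1) ∧
    Atil ∈ GammaHat ∧ Ttil ∈ GammaHat := by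
  have hq := ZMod.three_mul_sq_add_two_mul_add
  have hΓ : GammaHat = UnipotentFamily.carrier (fun n => 3 * n ^ 2 + 2 * n) := rfl
  rw [hΓ]
  exact ⟨UnipotentFamily.one_mem hq, fun X hX Y hY => UnipotentFamily.mul_mem hq hX hY,
    fun X hX => UnipotentFamily.exists_inverse_mem hq hX, ⟨1, 0, 4, 4, by decide⟩,
    ⟨0, 0, 0, 1, by decide⟩⟩
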